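/- For ADAPD iterates, if η < 1/(2L), then for all k ≥ 0: L_η(X^{k+1},X0^{k+1};Y^{k+1},Z^{k+1}) − L_η(X^k,X0^k;Y^k,Z^k) ≤ ((2Lη−1)/(2η))‖X^{k+1}−X^k‖_F² + ε_{k+1}/(2L) − (1/(2η))‖X0^{k+1}−X0^k‖_F² + η‖Y^{k+1}−Y^k‖_F² + η‖Z^{k+1}−Z^k‖_F². -/

import Mathlib

open Matrix Finset

attribute [local instance] Matrix.frobeniusNormedAddCommGroup Matrix.frobeniusNormedSpace

noncomputable section

variable {N p : ℕ}

/-- Frobenius inner product on `N × p` real matrices. -/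
def frobInner (A B : Matrix (Fin N) (Fin p) ℝ) : ℝ := ∑ i, ∑ j, A i j * B i j

/-- Squared Frobenius norm. -/
def frobSq (A : Matrix (Fin N) (Fin p) ℝ) : ℝ := frobInner A A

/-- Frobenius norm. -/
def frobNorm (A : Matrix (Fin N) (Fin p) ℝ) : ℝ := Real.sqrt (frobInner A A)

/-- The continuous linear functional `H ↦ ⟨G, H⟩_F`. -/
def frobCLM (G : Matrix (Fin N) (Fin p) ℝ) : Matrix (Fin N) (Fin p) ℝ →L[ℝ] ℝ :=
  LinearMap.toContinuousLinearMap
    { toFun := fun H => frobInner G H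
      map_add' := by
        intro x y
        simp [frobInner, Matrix.add_apply, mul_add, Finset.sum_add_distrib]
      map_smul' := by
        intro c x
        simp [frobInner, Matrix.smul_apply, Finset.mul_sum]
        ring_nf
        apply Finset.sum_congr rfl; intro i _
        apply Finset.sum_congr rfl; intro j _; ring }

/-- Spectral norm (operator 2-norm) of a square real matrix. -/
def specNorm {N : ℕ} (M : Matrix (Fin N) (Fin N) ℝ) : ℝ :=
  ‖Matrix.toEuclideanCLM (𝕜 := ℝ) M‖

/-- The all-ones `N × N` matrix. -/
def onesMat (N : ℕ) : Matrix (Fin N) (Fin N) ℝ := fun _ _ => 1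

/-- Quadratic form `‖A‖_M² := ⟨A, M A⟩_F` for a symmetric `M` (possibly negative). -/
def quadForm (M : Matrix (Fin N) (Fin N) ℝ) (A : Matrix (Fin N) (Fin p) ℝ) : ℝ :=
  frobInner A (M * A)

/-- Augmented Lagrangian `L_η(X, X0; Y, Z)`, where `S` plays the role of `√(I−W)`. -/
def Lag (F : Matrix (Fin N) (Fin p) ℝ → ℝ) (S : Matrix (Fin N) (Fin N) ℝ) (η : ℝ)
    (X X0 Y Z : Matrix (Fin N) (Fin p) ℝ) : ℝ :=
  F X + frobInner Y (X - X0) + (2*η)⁻¹ * frobSq (X - X0)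
    + frobInner Z (S * X0) + (2*η)⁻¹ * frobSq (S * X0)


/-! The change of the augmented Lagrangian splits along the three block updates. The `X`-update
is an inexact minimisation: the descent lemma for the `L`-smooth `F` and Young's inequality on the
residual `R` give `((2Lη−1)/(2η))‖ΔX‖² + ‖R‖²/(2L)`. The `X0`-update minimises exactly a quadratic
with Hessian `(2I − W)/η`, so it changes the Lagrangian by `−(‖ΔX0‖² + ⟨ΔX0, (I+W)ΔX0⟩)/(2η)`, and
`I + W ⪰ 0`. The dual ascent steps raise it by exactly `η‖ΔY‖² + η‖ΔZ‖²`. -/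

section Frobenius

variable (A B C : Matrix (Fin N) (Fin p) ℝ)

theorem frobInner_eq_trace : frobInner A B = trace (Aᵀ * B) := by
  simp only [frobInner, trace, Matrix.diag, mul_apply, transpose_apply]
  exact Finset.sum_comm

theorem frobInner_comm : frobInner A B = frobInner B A := by
  simp only [frobInner, mul_comm]

theorem frobInner_add_left : frobInner (A + B) C = frobInner A C + frobInner B C := by
  simp only [frobInner_eq_trace, transpose_add, Matrix.add_mul, trace_add]

theorem frobInner_add_right : frobInner A (B + C) = frobInner A B + frobInner A C := by
  simp only [frobInner_eq_trace, Matrix.mul_add, trace_add]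

theorem frobInner_sub_left : frobInner (A - B) C = frobInner A C - frobInner B C := by
  simp only [frobInner_eq_trace, transpose_sub, Matrix.sub_mul, trace_sub]

theorem frobInner_sub_right : frobInner A (B - C) = frobInner A B - frobInner A C := by
  simp only [frobInner_eq_trace, Matrix.mul_sub, trace_sub]

theorem frobInner_smul_left (r : ℝ) : frobInner (r • A) B = r * frobInner A B := by
  simp only [frobInner_eq_trace, transpose_smul, Matrix.smul_mul, trace_smul, smul_eq_mul]

theorem frobInner_smul_right (r : ℝ) : frobInner A (r • B) = r * frobInner A B := by
  simp only [frobInner_eq_trace, Matrix.mul_smul, trace_smul, smul_eq_mul]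

theorem frobInner_neg_right : frobInner A (-B) = -frobInner A B := by
  simp only [frobInner_eq_trace, Matrix.mul_neg, trace_neg]

theorem frobSq_neg : frobSq (-A) = frobSq A := by
  simp only [frobSq, frobInner_eq_trace, transpose_neg, Matrix.neg_mul, Matrix.mul_neg, neg_neg]

theorem frobSq_add : frobSq (A + B) = frobSq A + 2 * frobInner A B + frobSq B := by
  simp only [frobSq, frobInner_add_left, frobInner_add_right, frobInner_comm B A]
  ring

theorem frobSq_sub : frobSq (A - B) = frobSq A - 2 * frobInner A B + frobSq B := by
  simp only [frobSq, frobInner_sub_left, frobInner_sub_right, frobInner_comm B A]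
  ring

theorem frobInner_mul_right (M : Matrix (Fin N) (Fin N) ℝ) :
    frobInner A (M * B) = frobInner (Mᵀ * A) B := by
  simp only [frobInner_eq_trace, transpose_mul, transpose_transpose, Matrix.mul_assoc]

theorem quadForm_nonneg {M : Matrix (Fin N) (Fin N) ℝ} (hM : M.PosSemidef) : 0 ≤ quadForm M A := by
  rw [quadForm, frobInner_eq_trace, ← Matrix.mul_assoc]
  exact (hM.conjTranspose_mul_mul_same A).trace_nonneg

-- The Frobenius norm is by definition the norm of this iterated `L²` space; this gives
-- Cauchy–Schwarz for `frobInner`.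
def toPiLp (A : Matrix (Fin N) (Fin p) ℝ) : PiLp 2 (fun _ : Fin N => EuclideanSpace ℝ (Fin p)) :=
  WithLp.toLp 2 fun i => WithLp.toLp 2 (A i)

theorem norm_toPiLp : ‖toPiLp A‖ = ‖A‖ := rfl

theorem inner_toPiLp : inner ℝ (toPiLp A) (toPiLp B) = frobInner A B := by
  simp [toPiLp, PiLp.inner_apply, frobInner, mul_comm]

theorem abs_frobInner_le : |frobInner A B| ≤ ‖A‖ * ‖B‖ := by
  rw [← inner_toPiLp, ← norm_toPiLp, ← norm_toPiLp]
  exact abs_real_inner_le_norm _ _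

theorem frobSq_eq_norm_sq : frobSq A = ‖A‖ ^ 2 := by
  rw [frobSq, ← inner_toPiLp, ← norm_toPiLp, real_inner_self_eq_norm_sq]

theorem frobNorm_eq_norm : frobNorm A = ‖A‖ := by
  rw [frobNorm, ← frobSq, frobSq_eq_norm_sq, Real.sqrt_sq (norm_nonneg A)]

theorem frobInner_le_young {c : ℝ} (hc : 0 < c) :
    frobInner A B ≤ frobSq A / (2 * c) + c / 2 * frobSq B := by
  rw [frobSq_eq_norm_sq, frobSq_eq_norm_sq]
  calc frobInner A B ≤ ‖A‖ * ‖B‖ := (le_abs_self _).trans (abs_frobInner_le A B)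
    _ ≤ ‖A‖ ^ 2 / (2 * c) + c / 2 * ‖B‖ ^ 2 := by
      rw [div_add' _ _ _ (by positivity), le_div_iff₀ (by positivity)]
      nlinarith [sq_nonneg (‖A‖ - c * ‖B‖)]

end Frobenius

theorem image_one_ge_of_deriv_ge {φ φ' : ℝ → ℝ} {c : ℝ} (hφ : ∀ t, HasDerivAt φ (φ' t) t)
    (hφ' : ∀ t ∈ Set.Icc (0 : ℝ) 1, φ' 0 - c * t ≤ φ' t) : φ 0 + φ' 0 - c / 2 ≤ φ 1 := by
  let ψ : ℝ → ℝ := fun t => φ t - φ' 0 * t + c / 2 * t ^ 2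
  have hψ : ∀ t, HasDerivAt ψ (φ' t - φ' 0 + c * t) t := fun t =>
    (((hφ t).sub ((hasDerivAt_id t).const_mul (φ' 0))).add
      ((hasDerivAt_pow 2 t).const_mul (c / 2))).congr_deriv (by ring)
  have hmono : MonotoneOn ψ (Set.Icc 0 1) :=
    monotoneOn_of_hasDerivWithinAt_nonneg (convex_Icc 0 1)
      (fun t _ => (hψ t).continuousAt.continuousWithinAt) (fun t _ => (hψ t).hasDerivWithinAt)
      (fun t ht => by linarith [hφ' t (interior_subset ht)])
  have := hmono (Set.left_mem_Icc.2 zero_le_one) (Set.right_mem_Icc.2 zero_le_one) zero_le_one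
  simp only [ψ] at this
  linarith

theorem image_sub_image_le_frobInner_gradient {L : ℝ} {F : Matrix (Fin N) (Fin p) ℝ → ℝ}
    {G : Matrix (Fin N) (Fin p) ℝ → Matrix (Fin N) (Fin p) ℝ}
    (hgrad : ∀ U, HasFDerivAt F (frobCLM (G U)) U)
    (hLip : ∀ U V, frobNorm (G U - G V) ≤ L * frobNorm (U - V)) (A B : Matrix (Fin N) (Fin p) ℝ) :
    F A - F B ≤ frobInner (G A) (A - B) + L / 2 * frobSq (A - B) := by
  set D := B - A
  have hline : ∀ t : ℝ, HasDerivAt (fun s : ℝ => A + s • D) D t := fun t =>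
    (((hasDerivAt_id t).smul_const D).const_add A).congr_deriv (one_smul ℝ D)
  have hderiv_ge : ∀ t ∈ Set.Icc (0 : ℝ) 1,
      frobInner (G A) D - L * frobSq D * t ≤ frobInner (G (A + t • D)) D := by
    intro t ht
    have hG : ‖G (A + t • D) - G A‖ ≤ L * t * ‖D‖ := by
      simpa [frobNorm_eq_norm, norm_smul, abs_of_nonneg ht.1, mul_assoc] using hLip (A + t • D) A
    have hCS := neg_le_of_abs_le (abs_frobInner_le (G (A + t • D) - G A) D)
    rw [frobInner_sub_left] at hCS
    rw [frobSq_eq_norm_sq]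
    nlinarith [norm_nonneg D]
  have h := image_one_ge_of_deriv_ge (c := L * frobSq D)
    (fun t => (hgrad (A + t • D)).comp_hasDerivAt t (hline t))
    (fun t ht => by rw [zero_smul, add_zero]; exact hderiv_ge t ht)
  rw [Function.comp_apply, Function.comp_apply, zero_smul, add_zero, one_smul,
    add_sub_cancel] at h
  change F A + frobInner (G A) D - L * frobSq D / 2 ≤ F B at h
  have hAB : A - B = -D := by simp only [D]; abel
  rw [hAB, frobInner_neg_right, frobSq_neg]
  linarith

section Lagrangian

variable {F : Matrix (Fin N) (Fin p) ℝ → ℝ} {S : Matrix (Fin N) (Fin N) ℝ} {η : ℝ}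
  {X X' X0 X0' Y Y' Z Z' : Matrix (Fin N) (Fin p) ℝ}

theorem Lag_sub_Lag_primal :
    Lag F S η X' X0 Y Z - Lag F S η X X0 Y Z
      = F X' - F X + frobInner (Y + η⁻¹ • (X' - X0)) (X' - X) - (2 * η)⁻¹ * frobSq (X' - X) := by
  have hX : X - X0 = (X' - X0) - (X' - X) := by abel
  rw [Lag, Lag, hX, frobSq_sub (X' - X0), frobInner_sub_right Y (X' - X0), frobInner_add_left,
    frobInner_smul_left]
  ring

theorem Lag_sub_Lag_primal_le {G : Matrix (Fin N) (Fin p) ℝ → Matrix (Fin N) (Fin p) ℝ}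
    {L ε : ℝ} (hL : 0 < L) (hη : η ≠ 0) (hgrad : ∀ U, HasFDerivAt F (frobCLM (G U)) U)
    (hLip : ∀ U V, frobNorm (G U - G V) ≤ L * frobNorm (U - V))
    (hres : frobSq (G X' + Y + η⁻¹ • (X' - X0)) ≤ ε) :
    Lag F S η X' X0 Y Z - Lag F S η X X0 Y Z
      ≤ (2 * L * η - 1) / (2 * η) * frobSq (X' - X) + ε / (2 * L) := by
  have hdescent := image_sub_image_le_frobInner_gradient hgrad hLip X' X
  have hyoung := frobInner_le_young (G X' + Y + η⁻¹ • (X' - X0)) (X' - X) hL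
  have hres' : frobSq (G X' + Y + η⁻¹ • (X' - X0)) / (2 * L) ≤ ε / (2 * L) := by gcongr
  have hcoef : (2 * L * η - 1) / (2 * η) = L - (2 * η)⁻¹ := by field_simp
  rw [Lag_sub_Lag_primal, hcoef]
  simp only [frobInner_add_left] at hyoung ⊢
  linarith

theorem Lag_sub_Lag_consensus {W : Matrix (Fin N) (Fin N) ℝ} (hS : Sᵀ = S) (hSsq : S * S = 1 - W)
    (hη : η ≠ 0) (hX0' : X0' = (2 : ℝ)⁻¹ • (W * X0 + X + η • (Y - S * Z))) :
    Lag F S η X X0' Y Z - Lag F S η X X0 Y Z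
      = -(2 * η)⁻¹ * (frobSq (X0' - X0) + quadForm (1 + W) (X0' - X0)) := by
  obtain ⟨d, rfl⟩ : ∃ d, X0' = X0 + d := ⟨X0' - X0, by abel⟩
  have hupdate : η • (Y - S * Z) = (2 : ℝ) • d + (1 - W) * X0 - (X - X0) := by
    rw [Matrix.sub_mul, Matrix.one_mul]
    linear_combination (norm := module) (-2 : ℝ) • hX0'
  have hupdate_d := congrArg (frobInner · d) hupdate
  rw [frobInner_smul_left, frobInner_sub_left Y, frobInner_sub_left _ (X - X0), frobInner_add_left,
    frobInner_smul_left] at hupdate_d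
  have hSZ : frobInner Z (S * d) = frobInner (S * Z) d := by rw [frobInner_mul_right, hS]
  have hSX0 : frobInner (S * X0) (S * d) = frobInner ((1 - W) * X0) d := by
    rw [frobInner_mul_right, hS, ← Matrix.mul_assoc, hSsq]
  have hSd : frobSq (S * d) = frobSq d - quadForm W d := by
    rw [frobSq, frobInner_mul_right, hS, ← Matrix.mul_assoc, hSsq, frobInner_comm, quadForm,
      Matrix.sub_mul, Matrix.one_mul, frobInner_sub_right, frobSq]
  have hX : X - (X0 + d) = (X - X0) - d := by abel
  rw [Lag, Lag, hX, Matrix.mul_add, add_sub_cancel_left, frobSq_sub (X - X0), frobSq_add (S * X0),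
    frobInner_sub_right, frobInner_add_right, hSZ, hSX0, hSd, quadForm, quadForm, Matrix.add_mul,
    Matrix.one_mul, frobInner_add_right]
  simp only [frobSq]
  field_simp
  linear_combination (-2 : ℝ) * hupdate_d

theorem Lag_sub_Lag_consensus_le {W : Matrix (Fin N) (Fin N) ℝ} (hS : Sᵀ = S)
    (hSsq : S * S = 1 - W) (hW : (1 + W).PosSemidef) (hη : 0 < η)
    (hX0' : X0' = (2 : ℝ)⁻¹ • (W * X0 + X + η • (Y - S * Z))) :
    Lag F S η X X0' Y Z - Lag F S η X X0 Y Z ≤ -(2 * η)⁻¹ * frobSq (X0' - X0) := by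
  rw [Lag_sub_Lag_consensus hS hSsq hη.ne' hX0']
  have := quadForm_nonneg (X0' - X0) hW
  have : 0 < (2 * η)⁻¹ := by positivity
  nlinarith

theorem Lag_sub_Lag_dual (hη : η ≠ 0) (hY' : Y' = Y + η⁻¹ • (X - X0))
    (hZ' : Z' = Z + η⁻¹ • (S * X0)) :
    Lag F S η X X0 Y' Z' - Lag F S η X X0 Y Z = η * frobSq (Y' - Y) + η * frobSq (Z' - Z) := by
  have hY : X - X0 = η • (Y' - Y) := by rw [hY', add_sub_cancel_left, smul_inv_smul₀ hη]
  have hZ : S * X0 = η • (Z' - Z) := by rw [hZ', add_sub_cancel_left, smul_inv_smul₀ hη]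
  calc Lag F S η X X0 Y' Z' - Lag F S η X X0 Y Z
      = frobInner (Y' - Y) (X - X0) + frobInner (Z' - Z) (S * X0) := by
        rw [Lag, Lag, frobInner_sub_left, frobInner_sub_left]; ring
    _ = η * frobSq (Y' - Y) + η * frobSq (Z' - Z) := by
        rw [hY, hZ, frobInner_smul_right, frobInner_smul_right, frobSq, frobSq]

end Lagrangian

theorem adapd_al_decrease_general (N p : ℕ)
    -- mixing matrix assumptions
    (W : Matrix (Fin N) (Fin N) ℝ)
    (hWlb : Matrix.PosDef (1 + W))
    -- `S` is the unique positive semidefinite square root of `I − W`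
    (S : Matrix (Fin N) (Fin N) ℝ) (hSpsd : S.PosSemidef) (hSsq : S * S = 1 - W)
    -- objective: `F` is `L`-smooth (gradient `G` w.r.t. the Frobenius inner product)
    (L : ℝ) (hL : 0 < L)
    (F : Matrix (Fin N) (Fin p) ℝ → ℝ)
    (G : Matrix (Fin N) (Fin p) ℝ → Matrix (Fin N) (Fin p) ℝ)
    (hgrad : ∀ U, HasFDerivAt F (frobCLM (G U)) U)
    (hLip : ∀ U V, frobNorm (G U - G V) ≤ L * frobNorm (U - V))
    -- ADAPD iterates with parameter `η` and error tolerances `ε`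
    (η : ℝ) (hη : 0 < η)
    (ε : ℕ → ℝ)
    (X X0 Y Z : ℕ → Matrix (Fin N) (Fin p) ℝ)
    (hres : ∀ k, frobSq (G (X (k+1)) + Y k + η⁻¹ • (X (k+1) - X0 k)) ≤ ε (k+1))
    (hX0it : ∀ k, X0 (k+1) = (2:ℝ)⁻¹ • (W * X0 k + X (k+1) + η • (Y k - S * Z k)))
    (hYit : ∀ k, Y (k+1) = Y k + η⁻¹ • (X (k+1) - X0 (k+1)))
    (hZit : ∀ k, Z (k+1) = Z k + η⁻¹ • (S * X0 (k+1))) :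
    ∀ k : ℕ,
      Lag F S η (X (k+1)) (X0 (k+1)) (Y (k+1)) (Z (k+1))
          - Lag F S η (X k) (X0 k) (Y k) (Z k)
        ≤ (2*L*η - 1)/(2*η) * frobSq (X (k+1) - X k) + ε (k+1)/(2*L)
          - (2*η)⁻¹ * frobSq (X0 (k+1) - X0 k)
          + η * frobSq (Y (k+1) - Y k) + η * frobSq (Z (k+1) - Z k) := by
  intro k
  have hS : Sᵀ = S := by
    simpa only [conjTranspose_eq_transpose_of_trivial] using hSpsd.isHermitian.eq
  have hprimal := Lag_sub_Lag_primal_le (S := S) (X := X k) (Z := Z k) hL hη.ne' hgrad hLip (hres k)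
  have hconsensus := Lag_sub_Lag_consensus_le (F := F) hS hSsq hWlb.posSemidef hη (hX0it k)
  have hdual := Lag_sub_Lag_dual (F := F) hη.ne' (hYit k) (hZit k)
  linarith

/-- Lemma: change of the augmented Lagrangian over one ADAPD iteration. -/
theorem adapd_al_decrease (N p : ℕ) (hN : 0 < N) (hp : 0 < p)
    -- mixing matrix assumptions
    (W : Matrix (Fin N) (Fin N) ℝ) (hWsym : Wᵀ = W)
    (hWub : Matrix.PosSemidef (1 - W)) (hWlb : Matrix.PosDef (1 + W))
    (hWnull : ∀ v : Fin N → ℝ, (1 - W).mulVec v = 0 ↔ ∃ c : ℝ, v = fun _ => c)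
    (ρ : ℝ) (hρdef : ρ = specNorm (W - (N:ℝ)⁻¹ • onesMat N)) (hρlt : ρ < 1)
    -- `S` is the unique positive semidefinite square root of `I − W`
    (S : Matrix (Fin N) (Fin N) ℝ) (hSpsd : S.PosSemidef) (hSsq : S * S = 1 - W)
    -- objective: `F` is `L`-smooth (gradient `G` w.r.t. the Frobenius inner product)
    -- and bounded below by `flb`
    (L flb : ℝ) (hL : 0 < L)
    (F : Matrix (Fin N) (Fin p) ℝ → ℝ)
    (G : Matrix (Fin N) (Fin p) ℝ → Matrix (Fin N) (Fin p) ℝ)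
    (hgrad : ∀ U, HasFDerivAt F (frobCLM (G U)) U)
    (hLip : ∀ U V, frobNorm (G U - G V) ≤ L * frobNorm (U - V))
    (hlb : ∀ U, flb ≤ F U)
    -- ADAPD iterates with parameter `η` and error tolerances `ε`
    (η : ℝ) (hη : 0 < η)
    (ε : ℕ → ℝ) (hεpos : ∀ k, 0 < ε (k+1)) (hεmono : ∀ k, ε (k+2) ≤ ε (k+1))
    (X X0 Y Z : ℕ → Matrix (Fin N) (Fin p) ℝ)
    (hZ0 : ∃ U0 : Matrix (Fin N) (Fin p) ℝ, Z 0 = S * U0)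
    (hres : ∀ k, frobSq (G (X (k+1)) + Y k + η⁻¹ • (X (k+1) - X0 k)) ≤ ε (k+1))
    (hX0it : ∀ k, X0 (k+1) = (2:ℝ)⁻¹ • (W * X0 k + X (k+1) + η • (Y k - S * Z k)))
    (hYit : ∀ k, Y (k+1) = Y k + η⁻¹ • (X (k+1) - X0 (k+1)))
    (hZit : ∀ k, Z (k+1) = Z k + η⁻¹ • (S * X0 (k+1)))
    (hη2 : η < 1/(2*L)) :
    ∀ k : ℕ,
      Lag F S η (X (k+1)) (X0 (k+1)) (Y (k+1)) (Z (k+1))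
          - Lag F S η (X k) (X0 k) (Y k) (Z k)
        ≤ (2*L*η - 1)/(2*η) * frobSq (X (k+1) - X k) + ε (k+1)/(2*L)
          - (2*η)⁻¹ * frobSq (X0 (k+1) - X0 k)
          + η * frobSq (Y (k+1) - Y k) + η * frobSq (Z (k+1) - Z k) :=
  adapd_al_decrease_general N p W hWlb S hSpsd hSsq L hL F G hgrad hLip η hη ε X X0 Y Z hres hX0it
    hYit hZit

end
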